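/- For every integer k ≥ 1 there exists a polynomial P in two variables over ℚ, all of whose coefficients have nonnegative 2-adic valuation (i.e. coefficients that are 2-adic integers), such that f_{4k} = P(u/2, w/4) in ℚ[u,w]; moreover there is no such polynomial Q with f_{4k} = 2·Q(u/2, w/4) (that is, f_{4k} lies in ℤ₂[u/2, w/4] but 2^{2k−α(k)−1}·c_{4k} does not). -/

import Mathlib

open MvPolynomial

/-- ν₂ : the 2-adic valuation of a natural number. -/
noncomputable def ν₂ (n : ℕ) : ℕ := padicValNat 2 n

/-- α : the number of 1's in the binary expansion of a natural number. -/
def α (n : ℕ) : ℕ := (Nat.digits 2 n).sum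

/-- The variable u (degree 2 Bott class). -/
noncomputable def u : MvPolynomial (Fin 2) ℚ := X 0

/-- The variable w (playing the role of v²). -/
noncomputable def w : MvPolynomial (Fin 2) ℚ := X 1

/-- ψ : the ℚ-algebra endomorphism with ψ(u) = u, ψ(w) = 9w,
the action of 1 ∧ ψ³ on homotopy modulo torsion. -/
noncomputable def ψ : MvPolynomial (Fin 2) ℚ →ₐ[ℚ] MvPolynomial (Fin 2) ℚ :=
  MvPolynomial.aeval ![u, 9 * w]

/-- c k is the element c_{4k} = ∏_{i=1}^{k} (w - 9^{i-1}u²)/(9^k - 9^{i-1}); c 0 = 1. -/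
noncomputable def c (k : ℕ) : MvPolynomial (Fin 2) ℚ :=
  ∏ i ∈ Finset.Icc 1 k, (C (((9 : ℚ) ^ k - 9 ^ (i - 1))⁻¹) * (w - C ((9 : ℚ) ^ (i - 1)) * u ^ 2))

/-- f k is the element f_{4k} = 2^{2k - α(k)} c_{4k}. -/
noncomputable def f (k : ℕ) : MvPolynomial (Fin 2) ℚ :=
  C ((2 : ℚ) ^ (2 * k - α k)) * c k

/-- g k l is the element g_{4k,4l} (for l ≤ k). -/
noncomputable def g (k l : ℕ) : MvPolynomial (Fin 2) ℚ :=
  if (4 * l - α l : ℤ) ≤ 2 * k then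
    u ^ (2 * k + α l - 4 * l) * (C ((2 : ℚ)⁻¹) * u) ^ (2 * l - α l) * f l
  else
    (C ((2 : ℚ)⁻¹) * u) ^ (2 * (k - l)) * f l

/-!
With `D = ∏_{j<k} (9^k - 9^j)` one has `f_{4k} = λ · ∏_{j<k} (w/4 - 9^j (u/2)²)` where
`λ = 2^{2k-α(k)} 4^k / D`. Lifting the exponent gives `ν₂(9^k - 9^j) = 3 + ν₂(k - j)`, so
`ν₂(D) = 3k + ν₂(k!) = 4k - α(k)` by Legendre's formula and `λ` is a 2-adic unit. Hence
`P = λ ∏_{j<k} (X₁ - 9^j X₀²)` has 2-integral coefficients. Its coefficient of `X₁^k` is `λ`, which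
is not divisible by 2, and the substitution `(u, w) ↦ (u/2, w/4)` is invertible, so no `Q` with
`P = 2Q` can have 2-integral coefficients.
-/

open Finset

theorem padicValNat_finset_prod {ι : Type*} {p : ℕ} [Fact p.Prime] {s : Finset ι} {f : ι → ℕ}
    (hf : ∀ i ∈ s, f i ≠ 0) : padicValNat p (∏ i ∈ s, f i) = ∑ i ∈ s, padicValNat p (f i) := by
  classical
  induction s using Finset.induction with
  | empty => simp
  | insert i s hi ih =>
    rw [prod_insert hi, sum_insert hi, padicValNat.mul (hf i (mem_insert_self i s))
      (prod_ne_zero_iff.mpr fun j hj => hf j (mem_insert_of_mem hj)),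
      ih fun j hj => hf j (mem_insert_of_mem hj)]

theorem padicValRat_mul_intCast_nonneg {p : ℕ} [Fact p.Prime] {q : ℚ} (hq : 0 ≤ padicValRat p q)
    (z : ℤ) : 0 ≤ padicValRat p (q * z) := by
  rcases eq_or_ne q 0 with rfl | hq0
  · simp
  rcases eq_or_ne z 0 with rfl | hz0
  · simp
  rw [padicValRat.mul hq0 (Int.cast_ne_zero.mpr hz0), padicValRat.of_int]
  positivity

theorem ne_prime_mul_of_padicValRat_eq_zero {p : ℕ} [hp : Fact p.Prime] {x q : ℚ} (hx : x ≠ 0)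
    (hx0 : padicValRat p x = 0) (hq : 0 ≤ padicValRat p q) : x ≠ p * q := by
  rintro rfl
  rw [padicValRat.mul (by exact_mod_cast hp.out.ne_zero) (right_ne_zero_of_mul hx),
    padicValRat.self hp.out.one_lt] at hx0
  linarith

theorem aeval_C_mul_X_injective {σ K : Type*} [Field K] {a : σ → K} (ha : ∀ i, a i ≠ 0) :
    Function.Injective
      (aeval fun i => C (a i) * X i : MvPolynomial σ K →ₐ[K] MvPolynomial σ K) := by
  let unscale : MvPolynomial σ K →ₐ[K] MvPolynomial σ K := aeval fun i => C (a i)⁻¹ * X i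
  have hinv : unscale.comp (aeval fun i => C (a i) * X i) = AlgHom.id K (MvPolynomial σ K) :=
    algHom_ext fun i => by simp [unscale, ← mul_assoc, ← C_mul, ha i]
  exact Function.LeftInverse.injective (g := unscale) fun p => DFunLike.congr_fun hinv p

theorem padicValNat_two_nine_pow_sub_one {n : ℕ} (hn : n ≠ 0) :
    padicValNat 2 (9 ^ n - 1) = 3 + padicValNat 2 n := by
  have lte := padicValNat.pow_two_sub_one (x := 3) (n := 2 * n) (by norm_num) (by norm_num)
    (by omega) (even_two_mul n)
  rw [pow_mul, padicValNat.mul two_ne_zero hn, padicValNat.self one_lt_two,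
    show (3 + 1 : ℕ) = 2 ^ 2 from rfl, padicValNat.prime_pow] at lte
  norm_num at lte
  omega

theorem padicValNat_two_nine_pow_sub_nine_pow {j k : ℕ} (hjk : j < k) :
    padicValNat 2 (9 ^ k - 9 ^ j) = 3 + padicValNat 2 (k - j) := by
  have hsplit : 9 ^ k - 9 ^ j = 9 ^ j * (9 ^ (k - j) - 1) := by
    rw [Nat.mul_sub, mul_one, ← pow_add, Nat.add_sub_of_le hjk.le]
  have hodd : ¬ 2 ∣ 9 ^ j := by
    rw [Nat.two_dvd_ne_zero, Nat.pow_mod]; norm_num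
  rw [hsplit, padicValNat.mul (by positivity)
    (Nat.sub_ne_zero_of_lt (Nat.one_lt_pow (by omega) (by norm_num))),
    padicValNat.eq_zero_of_not_dvd hodd, padicValNat_two_nine_pow_sub_one (by omega), zero_add]

def cDenom (k : ℕ) : ℕ := ∏ j ∈ range k, (9 ^ k - 9 ^ j)

theorem nine_pow_sub_nine_pow_ne_zero {j k : ℕ} (hjk : j < k) : 9 ^ k - 9 ^ j ≠ 0 :=
  Nat.sub_ne_zero_of_lt (Nat.pow_lt_pow_right (by norm_num) hjk)

theorem cDenom_ne_zero (k : ℕ) : cDenom k ≠ 0 :=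
  prod_ne_zero_iff.mpr fun _ hj => nine_pow_sub_nine_pow_ne_zero (mem_range.mp hj)

theorem padicValNat_two_cDenom (k : ℕ) : padicValNat 2 (cDenom k) = 4 * k - α k := by
  have hterm : ∀ j ∈ range k, padicValNat 2 (9 ^ k - 9 ^ j) = 3 + padicValNat 2 (k - j) :=
    fun j hj => padicValNat_two_nine_pow_sub_nine_pow (mem_range.mp hj)
  have hfact : ∑ j ∈ range k, padicValNat 2 (k - j) = padicValNat 2 k.factorial := by
    rw [← prod_range_add_one_eq_factorial, padicValNat_finset_prod (fun j _ => j.succ_ne_zero),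
      ← sum_range_reflect]
    exact sum_congr rfl fun j hj => by have := mem_range.mp hj; congr 1; omega
  have legendre := sub_one_mul_padicValNat_factorial (p := 2) k
  have hα := Nat.digit_sum_le 2 k
  rw [cDenom, padicValNat_finset_prod fun j hj => nine_pow_sub_nine_pow_ne_zero (mem_range.mp hj),
    sum_congr rfl hterm, sum_add_distrib, sum_const, card_range, hfact, α, smul_eq_mul]
  omega

noncomputable def fScale (k : ℕ) : ℚ := (2 : ℚ) ^ (2 * k - α k) * 4 ^ k / cDenom k

theorem fScale_ne_zero (k : ℕ) : fScale k ≠ 0 :=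
  div_ne_zero (by positivity) (Nat.cast_ne_zero.mpr (cDenom_ne_zero k))

theorem padicValRat_two_fScale (k : ℕ) : padicValRat 2 (fScale k) = 0 := by
  have hα : α k ≤ k := Nat.digit_sum_le 2 k
  have hpow : (2 : ℚ) ^ (2 * k - α k) * 4 ^ k = 2 ^ (4 * k - α k) := by
    rw [show (4 : ℚ) = 2 ^ 2 by norm_num, ← pow_mul, ← pow_add]
    congr 1
    omega
  rw [fScale, hpow, padicValRat.div (by positivity) (Nat.cast_ne_zero.mpr (cDenom_ne_zero k)),
    padicValRat.pow, padicValRat.of_nat, padicValNat_two_cDenom]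
  have h2 : padicValRat 2 2 = 1 := by simpa using padicValRat.self (p := 2) one_lt_two
  rw [h2, mul_one, sub_self]

noncomputable def cNumer (R : Type*) [CommRing R] (k : ℕ) : MvPolynomial (Fin 2) R :=
  ∏ j ∈ range k, (X 1 - C (9 ^ j : R) * X 0 ^ 2)

theorem map_cNumer {R S : Type*} [CommRing R] [CommRing S] (φ : R →+* S) (k : ℕ) :
    map φ (cNumer R k) = cNumer S k := by
  simp [cNumer, map_prod, map_ofNat]

theorem coeff_single_card_prod_X_one_sub {R ι : Type*} [CommRing R] (s : Finset ι) (a : ι → R) :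
    coeff (Finsupp.single 1 #s) (∏ i ∈ s, (X 1 - C (a i) * X 0 ^ 2) : MvPolynomial (Fin 2) R)
      = 1 := by
  classical
  induction s using Finset.induction with
  | empty => simp
  | insert j s hj ih =>
    have hsingle : Finsupp.single (1 : Fin 2) #(insert j s)
        = Finsupp.single 1 1 + Finsupp.single 1 #s := by
      rw [card_insert_of_notMem hj, ← Finsupp.single_add, add_comm]
    have hvanish : coeff (Finsupp.single 1 1 + Finsupp.single 1 #s)
        (C (a j) * X 0 ^ 2 * ∏ i ∈ s, (X 1 - C (a i) * X 0 ^ 2) : MvPolynomial (Fin 2) R) = 0 := by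
      rw [mul_assoc, coeff_C_mul, pow_two, mul_assoc, coeff_X_mul', ← Finsupp.single_add]
      simp
    rw [prod_insert hj, hsingle, sub_mul, coeff_sub, coeff_X_mul, ih, hvanish, sub_zero]

theorem coeff_single_cNumer (R : Type*) [CommRing R] (k : ℕ) :
    coeff (Finsupp.single 1 k) (cNumer R k) = 1 := by
  have := coeff_single_card_prod_X_one_sub (range k) fun j => (9 : R) ^ j
  rwa [card_range] at this

theorem c_eq (k : ℕ) : c k = C ((cDenom k : ℚ)⁻¹) * cNumer ℚ k := by
  have hdenom : (cDenom k : ℚ) = ∏ j ∈ range k, ((9 : ℚ) ^ k - 9 ^ j) := by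
    rw [cDenom, Nat.cast_prod]
    refine prod_congr rfl fun j hj => ?_
    rw [Nat.cast_sub (Nat.pow_le_pow_right (by norm_num) (mem_range.mp hj).le)]
    push_cast
    rfl
  rw [c, ← Ico_add_one_right_eq_Icc, prod_Ico_eq_prod_range, Nat.add_sub_cancel]
  simp_rw [Nat.add_sub_cancel_left]
  rw [prod_mul_distrib, ← map_prod, prod_inv_distrib, ← hdenom]
  rfl

theorem aeval_rescale_injective :
    Function.Injective (aeval (R := ℚ) ![C (2⁻¹ : ℚ) * u, C (4⁻¹ : ℚ) * w]) := by
  have hdiag : ![C (2⁻¹ : ℚ) * u, C (4⁻¹ : ℚ) * w] = fun i => C (![2⁻¹, 4⁻¹] i) * X i := by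
    funext i
    fin_cases i <;> simp [u, w]
  rw [hdiag]
  exact aeval_C_mul_X_injective fun i => by fin_cases i <;> norm_num

theorem aeval_rescale_cNumer (k : ℕ) :
    aeval ![C (2⁻¹ : ℚ) * u, C (4⁻¹ : ℚ) * w] (cNumer ℚ k) = C ((4⁻¹ : ℚ) ^ k) * cNumer ℚ k := by
  have hfactor : ∀ j : ℕ, aeval ![C (2⁻¹ : ℚ) * u, C (4⁻¹ : ℚ) * w]
      (X 1 - C ((9 : ℚ) ^ j) * X 0 ^ 2) = C (4⁻¹ : ℚ) * (X 1 - C ((9 : ℚ) ^ j) * X 0 ^ 2) := by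
    intro j
    simp only [map_sub, map_mul, map_pow, aeval_X, aeval_C, algebraMap_eq, Matrix.cons_val_zero,
      Matrix.cons_val_one, Matrix.cons_val_fin_one, mul_pow, u, w]
    rw [show (C 2⁻¹ : MvPolynomial (Fin 2) ℚ) ^ 2 = C 4⁻¹ by rw [← C_pow]; norm_num]
    ring
  rw [cNumer, map_prod, prod_congr rfl fun j _ => hfactor j, prod_mul_distrib, prod_const,
    card_range, C_pow]

noncomputable def fPoly (k : ℕ) : MvPolynomial (Fin 2) ℚ :=
  C (fScale k) * map (Int.castRingHom ℚ) (cNumer ℤ k)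

theorem f_eq_aeval_fPoly (k : ℕ) :
    f k = aeval ![C (2⁻¹ : ℚ) * u, C (4⁻¹ : ℚ) * w] (fPoly k) := by
  rw [fPoly, fScale, map_mul, aeval_C, algebraMap_eq, map_cNumer, aeval_rescale_cNumer, f, c_eq,
    ← mul_assoc, ← mul_assoc, ← C_mul, ← C_mul]
  congr 2
  field_simp
  rw [← mul_pow]
  norm_num

theorem coeff_fPoly (k : ℕ) (m : Fin 2 →₀ ℕ) :
    (fPoly k).coeff m = fScale k * (cNumer ℤ k).coeff m := by
  rw [fPoly, coeff_C_mul, coeff_map, eq_intCast]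

theorem padicValRat_coeff_fPoly_nonneg (k : ℕ) (m : Fin 2 →₀ ℕ) :
    0 ≤ padicValRat 2 ((fPoly k).coeff m) := by
  rw [coeff_fPoly]
  exact padicValRat_mul_intCast_nonneg (padicValRat_two_fScale k).ge _

theorem coeff_single_fPoly (k : ℕ) :
    (fPoly k).coeff (Finsupp.single 1 k) = fScale k := by
  rw [coeff_fPoly, coeff_single_cNumer, Int.cast_one, mul_one]

theorem f_integral_general (k : ℕ) :
    (∃ P : MvPolynomial (Fin 2) ℚ,
      (∀ m, 0 ≤ padicValRat 2 (P.coeff m)) ∧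
      f k = MvPolynomial.aeval ![C ((2 : ℚ)⁻¹) * u, C ((4 : ℚ)⁻¹) * w] P) ∧
    ¬ (∃ Q : MvPolynomial (Fin 2) ℚ,
      (∀ m, 0 ≤ padicValRat 2 (Q.coeff m)) ∧
      f k = C (2 : ℚ) * MvPolynomial.aeval ![C ((2 : ℚ)⁻¹) * u, C ((4 : ℚ)⁻¹) * w] Q) := by
  refine ⟨⟨fPoly k, padicValRat_coeff_fPoly_nonneg k, f_eq_aeval_fPoly k⟩, ?_⟩
  rintro ⟨Q, hQ, hfQ⟩
  have hPQ : fPoly k = C 2 * Q := aeval_rescale_injective <| by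
    rw [← f_eq_aeval_fPoly, hfQ, map_mul, aeval_C, algebraMap_eq]
  have htop := congr_arg (coeff (Finsupp.single 1 k)) hPQ
  rw [coeff_single_fPoly, coeff_C_mul] at htop
  exact ne_prime_mul_of_padicValRat_eq_zero (fScale_ne_zero k) (padicValRat_two_fScale k) (hQ _)
    (by exact_mod_cast htop)

theorem f_integral (k : ℕ) (hk : 1 ≤ k) :
    (∃ P : MvPolynomial (Fin 2) ℚ,
      (∀ m, 0 ≤ padicValRat 2 (P.coeff m)) ∧
      f k = MvPolynomial.aeval ![C ((2 : ℚ)⁻¹) * u, C ((4 : ℚ)⁻¹) * w] P) ∧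
    ¬ (∃ Q : MvPolynomial (Fin 2) ℚ,
      (∀ m, 0 ≤ padicValRat 2 (Q.coeff m)) ∧
      f k = C (2 : ℚ) * MvPolynomial.aeval ![C ((2 : ℚ)⁻¹) * u, C ((4 : ℚ)⁻¹) * w] Q) :=
  f_integral_general k
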